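/- Let G=(A,B,E) be a connected bipartite graph with |Λ(G)| > 3. Then G has at most one massive vertex, and if it has a massive vertex then it has no critical vertex. -/

import Mathlib

/-!
If `u ≠ v`, every component `S` of `G - u` that misses `v` meets some pendant block
`P ⊆ S ∪ {u}`. To find it, descend: either `S ∪ {u}` is biconnected, and then it is a pendant
block whose only cut vertex is `u`; or `S` contains a leaf; or some `w ∈ S` separates a vertex
`a ∈ S` from `u`, and the component of `a` in `G - w` is a strictly smaller set to descend into.
The blocks obtained for the components of `G - u` missing `v` and for those of `G - v` missing
`u` are pairwise distinct, so `D(G,u) + D(G,v) ≤ |Λ(G)| + 2`. As `2 M ≤ |Λ|`, we have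
`M + R = |Λ| - M ≥ |Λ| / 2`, so two massive vertices, or a massive and a critical one, would
violate this bound.
-/

open SimpleGraph

namespace AugBic

noncomputable section

variable {V : Type*}

/-- Two vertices are biconnected: they are in the same connected component and remain so
after the removal of any single edge or any single vertex other than either of them. -/
def BiconnPair (G : SimpleGraph V) (u v : V) : Prop :=
  G.Reachable u v ∧
  (∀ e ∈ G.edgeSet, (G.deleteEdges {e}).Reachable u v) ∧
  (∀ w : V, ∀ hu : u ≠ w, ∀ hv : v ≠ w,
    (G.induce {x | x ≠ w}).Reachable ⟨u, hu⟩ ⟨v, hv⟩)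

/-- A set of vertices is biconnected if every pair of its vertices is biconnected. -/
def BiconnSet (G : SimpleGraph V) (S : Set V) : Prop :=
  ∀ u ∈ S, ∀ v ∈ S, BiconnPair G u v

/-- A block: (the induced subgraph on) a maximal biconnected set of vertices. -/
def IsBlock (G : SimpleGraph V) (S : Set V) : Prop :=
  S.Nonempty ∧ BiconnSet G S ∧ ∀ T : Set V, S ⊆ T → BiconnSet G T → T = S

/-- A cut vertex: its removal increases the number of connected components. -/
def IsCutVertex (G : SimpleGraph V) (v : V) : Prop :=
  Nat.card G.ConnectedComponent <
    Nat.card ((G.induce {x | x ≠ v}).ConnectedComponent)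

/-- A cut edge: its removal increases the number of connected components. -/
def IsCutEdge (G : SimpleGraph V) (e : Sym2 V) : Prop :=
  e ∈ G.edgeSet ∧
    Nat.card G.ConnectedComponent <
      Nat.card ((G.deleteEdges {e}).ConnectedComponent)

/-- A pendant block: a singular block consisting of a vertex of degree 1, or a
nonsingular block containing exactly one cut vertex. -/
def IsPendantBlock (G : SimpleGraph V) (S : Set V) : Prop :=
  IsBlock G S ∧
    ((∃ v, S = {v} ∧ (G.neighborSet v).ncard = 1) ∨
     (1 < S.ncard ∧ ∃! v, v ∈ S ∧ IsCutVertex G v))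

/-- Λ(G): the set of pendant blocks of `G`. -/
def pendantBlocks (G : SimpleGraph V) : Set (Set V) :=
  {S | IsPendantBlock G S}

/-- A block is of type `P` (for `P = A` or `P = B`) if all its noncut vertices lie in `P`. -/
def TypeOnly (G : SimpleGraph V) (P : Set V) (S : Set V) : Prop :=
  ∀ v ∈ S, ¬IsCutVertex G v → v ∈ P

/-- A block is type AB if it has a noncut vertex in `A` and a noncut vertex in `B`. -/
def TypeAB (G : SimpleGraph V) (A B : Set V) (S : Set V) : Prop :=
  (∃ v ∈ S, ¬IsCutVertex G v ∧ v ∈ A) ∧ (∃ v ∈ S, ¬IsCutVertex G v ∧ v ∈ B)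

/-- A legal pair: two distinct pendant blocks, not both of type A and not both of type B. -/
def LegalPair (G : SimpleGraph V) (A B : Set V) (S T : Set V) : Prop :=
  IsPendantBlock G S ∧ IsPendantBlock G T ∧ S ≠ T ∧
  ¬(TypeOnly G A S ∧ TypeOnly G A T) ∧ ¬(TypeOnly G B S ∧ TypeOnly G B T)

/-- A legal edge: a vertex pair in `A × B` that is not an edge of `G`. -/
def LegalEdge (G : SimpleGraph V) (A B : Set V) (a b : V) : Prop :=
  a ∈ A ∧ b ∈ B ∧ ¬G.Adj a b

/-- A binding edge for a legal pair: a legal edge joining two noncut vertices,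
one from each block of the pair. -/
def BindingEdge (G : SimpleGraph V) (A B : Set V) (S T : Set V) (a b : V) : Prop :=
  LegalEdge G A B a b ∧
  ((a ∈ S ∧ ¬IsCutVertex G a ∧ b ∈ T ∧ ¬IsCutVertex G b) ∨
   (a ∈ T ∧ ¬IsCutVertex G a ∧ b ∈ S ∧ ¬IsCutVertex G b))

/-- A legal matching of a set `Λ'` of pendant blocks: a set of legal pairs between elements
of `Λ'` such that each element of `Λ'` belongs to at most one pair. -/
def IsLegalMatching (G : SimpleGraph V) (A B : Set V) (Λ' : Set (Set V))
    (N : Set (Set V × Set V)) : Prop :=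
  (∀ q ∈ N, q.1 ∈ Λ' ∧ q.2 ∈ Λ' ∧ LegalPair G A B q.1 q.2) ∧
  (∀ q ∈ N, ∀ q' ∈ N, q ≠ q' →
    ({q.1, q.2} ∩ {q'.1, q'.2} : Set (Set V)) = ∅)

/-- M(Λ'): the maximum cardinality of a legal matching of `Λ'`. -/
def maxMatching (G : SimpleGraph V) (A B : Set V) (Λ' : Set (Set V)) : ℕ :=
  sSup {k | ∃ N, IsLegalMatching G A B Λ' N ∧ N.ncard = k}

/-- R(Λ') = |Λ'| − 2·M(Λ'). -/
def Rnum (G : SimpleGraph V) (A B : Set V) (Λ' : Set (Set V)) : ℕ :=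
  Λ'.ncard - 2 * maxMatching G A B Λ'

/-- A graph is componentwise biconnected if every connected component is a block. -/
def ComponentwiseBiconnected (G : SimpleGraph V) : Prop :=
  ∀ c : G.ConnectedComponent, IsBlock G c.supp

/-- D(G,u): the number of connected components of X − {u}, where X is the
connected component of G containing u. -/
def Dnum (G : SimpleGraph V) (u : V) : ℕ :=
  Nat.card ((G.induce {v | G.Reachable u v ∧ v ≠ u}).ConnectedComponent)

/-- C(G): the number of connected components of G that are not blocks. -/
def Cnum (G : SimpleGraph V) : ℕ :=
  Nat.card {c : G.ConnectedComponent // ¬IsBlock G c.supp}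

/-- η(G) = max{ max_u D(G,u) + C(G) − 2, M(Λ(G)) + R(Λ(G)) }. -/
def eta (G : SimpleGraph V) (A B : Set V) : ℕ :=
  max ((⨆ u : V, Dnum G u) + Cnum G - 2)
      (maxMatching G A B (pendantBlocks G) + Rnum G A B (pendantBlocks G))

/-- A biconnector: a set of legal edges whose addition makes `G` componentwise biconnected. -/
def IsBiconnector (G : SimpleGraph V) (A B : Set V) (L : Set (Sym2 V)) : Prop :=
  (∀ e ∈ L, ∃ a b : V, e = s(a, b) ∧ LegalEdge G A B a b) ∧
  ComponentwiseBiconnected (G ⊔ SimpleGraph.fromEdgeSet L)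

/-- B(G): the minimum number of edges of a biconnector of `G`. -/
def Bnum (G : SimpleGraph V) (A B : Set V) : ℕ :=
  sInf {k | ∃ L, IsBiconnector G A B L ∧ L.ncard = k}

/-- A connected component is an isolated edge. -/
def IsIsolatedEdgeComp (G : SimpleGraph V) (c : G.ConnectedComponent) : Prop :=
  ∃ u v : V, G.Adj u v ∧ c.supp = {u, v}

/-- C1(G): the number of components that are neither isolated edges nor blocks. -/
def C1num (G : SimpleGraph V) : ℕ :=
  Nat.card {c : G.ConnectedComponent // ¬IsIsolatedEdgeComp G c ∧ ¬IsBlock G c.supp}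

/-- C2(G): the number of isolated-edge components. -/
def C2num (G : SimpleGraph V) : ℕ :=
  Nat.card {c : G.ConnectedComponent // IsIsolatedEdgeComp G c}

/-- C3(G): the number of components that are nonsingular blocks. -/
def C3num (G : SimpleGraph V) : ℕ :=
  Nat.card {c : G.ConnectedComponent // IsBlock G c.supp ∧ 1 < c.supp.ncard}

/-- A cut vertex `u` is critical if D(G,u) − 1 = M(Λ(G)) + R(Λ(G)). -/
def Critical (G : SimpleGraph V) (A B : Set V) (u : V) : Prop :=
  IsCutVertex G u ∧
    Dnum G u - 1 = maxMatching G A B (pendantBlocks G) + Rnum G A B (pendantBlocks G)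

/-- A cut vertex `u` is massive if D(G,u) − 1 > M(Λ(G)) + R(Λ(G)). -/
def Massive (G : SimpleGraph V) (A B : Set V) (u : V) : Prop :=
  IsCutVertex G u ∧
    maxMatching G A B (pendantBlocks G) + Rnum G A B (pendantBlocks G) < Dnum G u - 1

/-- Vertices of the block tree: blocks (b-vertices), cut vertices and cut edges (c-vertices). -/
inductive BTV (V : Type*) where
  | blk : Set V → BTV V
  | cv : V → BTV V
  | ce : Sym2 V → BTV V

/-- Valid vertices of the block tree of `G`: nonsingular blocks and singular pendant blocks
(b-vertices), together with cut vertices and cut edges (c-vertices). -/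
def IsBTVert (G : SimpleGraph V) : BTV V → Prop
  | .blk S => IsBlock G S ∧ (1 < S.ncard ∨ ∃ v, S = {v} ∧ (G.neighborSet v).ncard = 1)
  | .cv v => IsCutVertex G v
  | .ce e => IsCutEdge G e

/-- Adjacency of the block tree: a nonsingular block is joined to each cut vertex in it,
a cut vertex to each cut edge incident to it, and a cut edge to each singular (pendant)
block containing one of its endpoints. -/
def btAdj (G : SimpleGraph V) : BTV V → BTV V → Prop
  | .blk _, .blk _ => False
  | .blk S, .cv c => 1 < S.ncard ∧ c ∈ S
  | .blk S, .ce e => ∃ v, S = {v} ∧ v ∈ e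
  | .cv c, .blk S => 1 < S.ncard ∧ c ∈ S
  | .cv _, .cv _ => False
  | .cv c, .ce e => c ∈ e
  | .ce e, .blk S => ∃ v, S = {v} ∧ v ∈ e
  | .ce e, .cv c => c ∈ e
  | .ce _, .ce _ => False

/-- The vertex type of the block tree Ψ(G). -/
abbrev BTVert (G : SimpleGraph V) := {x : BTV V // IsBTVert G x}

/-- The block tree Ψ(G). -/
def blockTree (G : SimpleGraph V) : SimpleGraph (BTVert G) where
  Adj x y := btAdj G x.1 y.1
  symm := by
    constructor
    rintro ⟨x, hx⟩ ⟨y, hy⟩ h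
    cases x <;> cases y <;> simp_all [btAdj]
  loopless := by
    constructor
    rintro ⟨x, hx⟩ h
    cases x <;> simp_all [btAdj]

/-- Degree of a vertex of the block tree. -/
def btDeg (G : SimpleGraph V) (x : BTVert G) : ℕ :=
  Nat.card ((blockTree G).neighborSet x)

/-- A path is branchless if all its internal vertices have degree two. -/
def Branchless {W : Type*} (T : SimpleGraph W) {x y : W} (p : T.Walk x y) : Prop :=
  p.IsPath ∧ ∀ z ∈ p.support, z ≠ x → z ≠ y → Nat.card (T.neighborSet z) = 2

/-- A leaf clings to a vertex `v` if there is a branchless path between it and `v`. -/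
def Clings {W : Type*} (T : SimpleGraph W) (l v : W) : Prop :=
  ∃ p : T.Walk l v, Branchless T p

/-- The vertex set of the component of `c` in `G - u` (empty when `c = u`). -/
def compAvoiding (G : SimpleGraph V) (u c : V) : Set V :=
  {z | ∃ p : G.Walk c z, u ∉ p.support}

def compsAvoiding (G : SimpleGraph V) (u : V) : Set (Set V) :=
  {S | ∃ c, c ≠ u ∧ compAvoiding G u c = S}

section CompAvoiding

variable {G : SimpleGraph V} {u w a c z : V}

lemma ne_of_mem_compAvoiding (h : z ∈ compAvoiding G u c) : z ≠ u := by
  rintro rfl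
  obtain ⟨p, hp⟩ := h
  exact hp p.end_mem_support

lemma mem_compAvoiding_self (hc : c ≠ u) : c ∈ compAvoiding G u c :=
  ⟨.nil, by simpa using hc.symm⟩

lemma mem_compAvoiding_of_walk (ha : a ∈ compAvoiding G u c) (p : G.Walk a z)
    (hp : u ∉ p.support) : z ∈ compAvoiding G u c := by
  obtain ⟨q, hq⟩ := ha
  exact ⟨q.append p, by simp [Walk.mem_support_append_iff, hq, hp]⟩

lemma mem_compAvoiding_of_adj (ha : a ∈ compAvoiding G u c) (h : G.Adj a z) (hz : z ≠ u) :
    z ∈ compAvoiding G u c :=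
  mem_compAvoiding_of_walk ha h.toWalk (by simp [(ne_of_mem_compAvoiding ha).symm, hz.symm])

lemma mem_compAvoiding_comm : a ∈ compAvoiding G u c ↔ c ∈ compAvoiding G u a :=
  ⟨fun ⟨p, hp⟩ => ⟨p.reverse, by simpa using hp⟩,
    fun ⟨p, hp⟩ => ⟨p.reverse, by simpa using hp⟩⟩

lemma compAvoiding_eq_of_mem (ha : a ∈ compAvoiding G u c) :
    compAvoiding G u a = compAvoiding G u c := by
  ext z
  refine ⟨fun ⟨p, hp⟩ => mem_compAvoiding_of_walk ha p hp, fun ⟨p, hp⟩ => ?_⟩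
  exact mem_compAvoiding_of_walk (mem_compAvoiding_comm.mp ha) p hp

lemma compAvoiding_subset_of_notMem (h : u ∉ compAvoiding G w a) :
    compAvoiding G w a ⊆ compAvoiding G u a := by
  classical
  rintro z ⟨p, hp⟩
  refine ⟨p, fun hu => h ⟨p.takeUntil u hu, fun hw => hp ?_⟩⟩
  exact p.support_takeUntil_subset_support hu hw

lemma reachable_induce_iff_mem_compAvoiding (ha : a ≠ u) (hz : z ≠ u) :
    (G.induce {x | x ≠ u}).Reachable ⟨a, ha⟩ ⟨z, hz⟩ ↔ z ∈ compAvoiding G u a := by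
  refine ⟨fun ⟨q⟩ => ⟨q.map (Embedding.induce _).toHom, fun hu => ?_⟩,
    fun ⟨p, hp⟩ => ?_⟩
  · obtain ⟨x, -, hx⟩ := List.mem_map.mp (Walk.support_map _ q ▸ hu)
    exact x.2 hx
  · exact ⟨p.induce {x | x ≠ u} fun x hx hxu => hp (hxu ▸ hx)⟩

/-- Walk from `t` to `u` and stop at the first visit of `u`: everything before it lies in the
component of `t` in `G - u`. -/
lemma mem_compAvoiding_of_notMem_insert (hconn : G.Preconnected) {t : V}
    (h : w ∉ insert u (compAvoiding G u t)) : u ∈ compAvoiding G w t := by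
  classical
  obtain ⟨p⟩ := hconn t u
  have hwu : w ≠ u := fun hwu => h (by simp [hwu])
  refine ⟨p.takeUntil u p.end_mem_support, fun hw => h (Set.mem_insert_of_mem _ ?_)⟩
  exact ⟨p.takeUntil w (p.support_takeUntil_subset_support _ hw),
    Walk.notMem_support_takeUntil_support_takeUntil_subset hwu _ hw⟩

end CompAvoiding

section CutVertices

variable {G : SimpleGraph V} {u y : V}

lemma natCard_connectedComponent_induce_ne (G : SimpleGraph V) (u : V) :
    Nat.card (G.induce {x | x ≠ u}).ConnectedComponent = (compsAvoiding G u).ncard := by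
  let f : (G.induce {x | x ≠ u}).ConnectedComponent → Set V :=
    ConnectedComponent.lift (fun x => compAvoiding G u x.1) fun x y p _ =>
      (compAvoiding_eq_of_mem ((reachable_induce_iff_mem_compAvoiding x.2 y.2).mp p.reachable)).symm
  have hf : Function.Injective f := by
    refine ConnectedComponent.ind₂ fun x y hxy => ConnectedComponent.sound ?_
    change compAvoiding G u x.1 = compAvoiding G u y.1 at hxy
    exact (reachable_induce_iff_mem_compAvoiding x.2 y.2).mpr (hxy ▸ mem_compAvoiding_self y.2)
  have hrange : Set.range f = compsAvoiding G u := by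
    ext S
    simp only [Set.mem_range, ConnectedComponent.exists, compsAvoiding]
    exact ⟨fun ⟨x, hx⟩ => ⟨x.1, x.2, hx⟩, fun ⟨c, hc, hS⟩ => ⟨⟨c, hc⟩, hS⟩⟩
  rw [← hrange, ← Nat.card_coe_set_eq, Nat.card_range_of_injective hf]

lemma dnum_eq_ncard_compsAvoiding (hconn : G.Preconnected) :
    Dnum G u = (compsAvoiding G u).ncard := by
  have : {v | G.Reachable u v ∧ v ≠ u} = {v | v ≠ u} :=
    Set.ext fun v => and_iff_right (hconn u v)
  rw [Dnum, this, natCard_connectedComponent_induce_ne]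

lemma isCutVertex_iff_one_lt_ncard (hconn : G.Connected) :
    IsCutVertex G u ↔ 1 < (compsAvoiding G u).ncard := by
  have : Nat.card G.ConnectedComponent = 1 := Nat.card_eq_one_iff_unique.mpr
    ⟨hconn.preconnected.subsingleton_connectedComponent, ⟨G.connectedComponentMk u⟩⟩
  rw [IsCutVertex, this, natCard_connectedComponent_induce_ne]

lemma not_isCutVertex_of_forall_mem_compAvoiding [Finite V] (hconn : G.Connected)
    (h : ∀ t, t ≠ y → u ∈ compAvoiding G y t) : ¬IsCutVertex G y := by
  rw [isCutVertex_iff_one_lt_ncard hconn, not_lt, Set.ncard_le_one]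
  rintro _ ⟨t, hty, rfl⟩ _ ⟨t', hty', rfl⟩
  rw [← compAvoiding_eq_of_mem (h t hty), ← compAvoiding_eq_of_mem (h t' hty')]

end CutVertices

section PendantBlocks

variable {G : SimpleGraph V} {u c z : V}

lemma isPendantBlock_singleton {x y : V} (hy : G.neighborSet y = {x}) :
    IsPendantBlock G {y} := by
  refine ⟨⟨Set.singleton_nonempty y, ?_, fun T hyT hT => ?_⟩,
    Or.inl ⟨y, rfl, by simp [hy]⟩⟩
  · simp only [BiconnSet, Set.mem_singleton_iff, forall_eq]
    exact ⟨.rfl, fun _ _ => .rfl, fun _ _ _ => .rfl⟩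
  · refine Set.eq_singleton_iff_unique_mem.mpr ⟨hyT rfl, fun t ht => ?_⟩
    have hyx : G.Adj y x := by rw [← mem_neighborSet, hy]; rfl
    obtain ⟨p⟩ := (hT y (hyT rfl) t ht).2.1 s(y, x) hyx
    cases p with
    | nil => rfl
    | cons h _ =>
      obtain ⟨hadj, hne⟩ := deleteEdges_adj.mp h
      obtain rfl : _ = x := (Set.ext_iff.mp hy _).mp hadj
      exact (hne rfl).elim

lemma isPendantBlock_insert_compAvoiding [Finite V] (hconn : G.Connected) (hc : c ≠ u)
    (hz : z ≠ u) (hzc : z ∉ compAvoiding G u c)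
    (hbc : BiconnSet G (insert u (compAvoiding G u c))) :
    IsPendantBlock G (insert u (compAvoiding G u c)) := by
  set S := compAvoiding G u c
  have hcS : c ∈ S := mem_compAvoiding_self hc
  have hmax : ∀ T, insert u S ⊆ T → BiconnSet G T → T = insert u S := by
    refine fun T hsub hT => Set.Subset.antisymm (fun t ht => ?_) hsub
    by_cases htu : t = u
    · exact htu ▸ Set.mem_insert _ _
    · have hct := (hT c (hsub (Set.mem_insert_of_mem _ hcS)) t ht).2.2 u hc htu
      exact Set.mem_insert_of_mem _ ((reachable_induce_iff_mem_compAvoiding hc htu).mp hct)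
  have hcut : IsCutVertex G u := by
    refine (isCutVertex_iff_one_lt_ncard hconn).mpr ((Set.one_lt_ncard_iff).mpr
      ⟨S, compAvoiding G u z, ⟨c, hc, rfl⟩, ⟨z, hz, rfl⟩, fun h => hzc ?_⟩)
    exact h ▸ mem_compAvoiding_self hz
  have hnoncut : ∀ y ∈ S, ¬IsCutVertex G y := by
    intro y hy
    have hyu := ne_of_mem_compAvoiding hy
    refine not_isCutVertex_of_forall_mem_compAvoiding (u := u) hconn fun t hty => ?_
    by_cases ht : t ∈ insert u S
    · rcases ht with rfl | ht
      · exact mem_compAvoiding_self hyu.symm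
      · have htu := (hbc t (Set.mem_insert_of_mem _ ht) u (Set.mem_insert _ _)).2.2 y hty hyu.symm
        exact (reachable_induce_iff_mem_compAvoiding hty hyu.symm).mp htu
    · refine mem_compAvoiding_of_notMem_insert hconn.preconnected ?_
      rintro (rfl | hyt)
      · exact hyu rfl
      · exact ht (Set.mem_insert_of_mem _
          ((compAvoiding_eq_of_mem hy).subset (mem_compAvoiding_comm.mp hyt)))
  refine ⟨⟨⟨u, Set.mem_insert _ _⟩, hbc, hmax⟩,
    Or.inr ⟨?_, u, ⟨Set.mem_insert _ _, hcut⟩, ?_⟩⟩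
  · exact (Set.one_lt_ncard_iff).mpr
      ⟨u, c, Set.mem_insert _ _, Set.mem_insert_of_mem _ hcS, hc.symm⟩
  · rintro y ⟨rfl | hy, hycut⟩
    · rfl
    · exact absurd hycut (hnoncut y hy)

end PendantBlocks

section Separators

variable {G : SimpleGraph V} {u c : V}

lemma reachable_deleteEdges_or_reachable (hconn : G.Preconnected) (x y t : V) :
    (G.deleteEdges {s(x, y)}).Reachable t x ∨ (G.deleteEdges {s(x, y)}).Reachable t y := by
  by_contra! h
  obtain ⟨p⟩ := hconn t x
  obtain ⟨d, -, hd, hd'⟩ :=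
    p.exists_boundary_dart {z | (G.deleteEdges {s(x, y)}).Reachable t z} .rfl h.1
  by_cases he : s(d.fst, d.snd) = s(x, y)
  · rcases Sym2.eq_iff.mp he with ⟨h1, -⟩ | ⟨h1, -⟩
    · exact h.1 (h1 ▸ hd)
    · exact h.2 (h1 ▸ hd)
  · exact hd' (hd.trans (deleteEdges_adj.mpr ⟨d.adj, he⟩).reachable)

lemma mem_compAvoiding_of_separates (hconn : G.Preconnected) {w t : V} (hwu : w ≠ u)
    (ht : t ∈ insert u (compAvoiding G u c)) (hut : u ∉ compAvoiding G w t) :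
    w ∈ compAvoiding G u c ∧ t ∈ compAvoiding G u c := by
  have htS : t ∈ compAvoiding G u c := by
    rcases ht with rfl | ht
    · exact absurd (mem_compAvoiding_self hwu.symm) hut
    · exact ht
  refine ⟨by_contra fun hw => hut (mem_compAvoiding_of_notMem_insert hconn ?_), htS⟩
  rw [compAvoiding_eq_of_mem htS]
  rintro (h | h)
  exacts [hwu h, hw h]

lemma exists_leaf_or_separator_of_bridge {x y b : V} (hxy : G.Adj x y)
    (hb : b ∈ compAvoiding G u c) (hby : (G.deleteEdges {s(x, y)}).Reachable b y)
    (hbu : ¬(G.deleteEdges {s(x, y)}).Reachable b u) :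
    (∃ y ∈ compAvoiding G u c, ∃ x, G.neighborSet y = {x}) ∨
      ∃ w ∈ compAvoiding G u c, ∃ a ∈ compAvoiding G u c,
        a ≠ w ∧ u ∉ compAvoiding G w a := by
  classical
  have hyS : y ∈ compAvoiding G u c := by
    obtain ⟨p⟩ := hby
    refine mem_compAvoiding_of_walk hb (p.mapLe (G.deleteEdges_le _)) fun hu => ?_
    rw [Walk.support_mapLe_eq_support] at hu
    exact hbu ⟨p.takeUntil u hu⟩
  by_cases hz : ∃ z, G.Adj y z ∧ z ≠ x
  · obtain ⟨z, hyz, hzx⟩ := hz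
    have hbz : (G.deleteEdges {s(x, y)}).Reachable b z := by
      refine hby.trans (deleteEdges_adj.mpr ⟨hyz, fun h => hzx ?_⟩).reachable
      rcases Sym2.eq_iff.mp h with ⟨rfl, -⟩ | ⟨-, rfl⟩
      exacts [absurd hxy (G.irrefl), rfl]
    have hzu : z ≠ u := fun h => hbu (h ▸ hbz)
    refine Or.inr ⟨y, hyS, z, mem_compAvoiding_of_adj hyS hyz hzu, hyz.ne',
      fun ⟨p, hp⟩ => ?_⟩
    refine hbu (hbz.trans (reachable_deleteEdges_iff_exists_walk.mpr ⟨p, fun he => hp ?_⟩))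
    exact p.snd_mem_support_of_mem_edges he
  · push Not at hz
    exact Or.inl ⟨y, hyS, x, Set.ext fun z => ⟨hz z, fun h => h ▸ hxy.symm⟩⟩

lemma exists_leaf_or_separator_of_not_biconnSet (hconn : G.Preconnected)
    (hnb : ¬BiconnSet G (insert u (compAvoiding G u c))) :
    (∃ y ∈ compAvoiding G u c, ∃ x, G.neighborSet y = {x}) ∨
      ∃ w ∈ compAvoiding G u c, ∃ a ∈ compAvoiding G u c,
        a ≠ w ∧ u ∉ compAvoiding G w a := by
  unfold BiconnSet at hnb
  push Not at hnb
  obtain ⟨a, ha, b, hb, hab⟩ := hnb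
  by_cases hedge : ∀ e ∈ G.edgeSet, (G.deleteEdges {e}).Reachable a b
  · have hvert : ¬∀ w (haw : a ≠ w) (hbw : b ≠ w),
        (G.induce {x | x ≠ w}).Reachable ⟨a, haw⟩ ⟨b, hbw⟩ :=
      fun h => hab ⟨hconn a b, hedge, h⟩
    push Not at hvert
    obtain ⟨w, haw, hbw, hnr⟩ := hvert
    rw [reachable_induce_iff_mem_compAvoiding] at hnr
    have hwu : w ≠ u := by
      rintro rfl
      have haS := ha.resolve_left haw
      exact hnr ((compAvoiding_eq_of_mem haS).symm.subset (hb.resolve_left hbw))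
    have : u ∉ compAvoiding G w a ∨ u ∉ compAvoiding G w b := by
      by_contra! h
      have := (compAvoiding_eq_of_mem h.2).symm.trans (compAvoiding_eq_of_mem h.1)
      exact hnr (this.subset (mem_compAvoiding_self hbw))
    rcases this with h | h
    · obtain ⟨hw, haS⟩ := mem_compAvoiding_of_separates hconn hwu ha h
      exact Or.inr ⟨w, hw, a, haS, haw, h⟩
    · obtain ⟨hw, hbS⟩ := mem_compAvoiding_of_separates hconn hwu hb h
      exact Or.inr ⟨w, hw, b, hbS, hbw, h⟩
  · push Not at hedge
    obtain ⟨e, he, hnr⟩ := hedge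
    obtain ⟨x, y⟩ := e
    have : ∃ t ∈ insert u (compAvoiding G u c), ¬(G.deleteEdges {s(x, y)}).Reachable t u := by
      by_contra! h
      exact hnr ((h a ha).trans (h b hb).symm)
    obtain ⟨t, ht, htu⟩ := this
    have htS : t ∈ compAvoiding G u c := ht.resolve_left fun h => htu (h ▸ .rfl)
    rcases reachable_deleteEdges_or_reachable hconn x y t with htx | hty
    · rw [Sym2.eq_swap] at htx htu
      exact exists_leaf_or_separator_of_bridge he.symm htS htx htu
    · exact exists_leaf_or_separator_of_bridge he htS hty htu

end Separators

section Counting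

variable {G : SimpleGraph V} {u v : V}

theorem exists_pendantBlock_of_compAvoiding [Finite V] (hconn : G.Connected) {c z : V}
    (hc : c ≠ u) (hz : z ≠ u) (hzc : z ∉ compAvoiding G u c) :
    ∃ P, IsPendantBlock G P ∧ (P ∩ compAvoiding G u c).Nonempty ∧
      P ⊆ insert u (compAvoiding G u c) := by
  induction hn : (compAvoiding G u c).ncard using Nat.strong_induction_on
    generalizing u c z with
  | _ n ih =>
  have hcS := mem_compAvoiding_self (G := G) hc
  by_cases hbc : BiconnSet G (insert u (compAvoiding G u c))
  · exact ⟨_, isPendantBlock_insert_compAvoiding hconn hc hz hzc hbc,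
      ⟨c, Set.mem_insert_of_mem _ hcS, hcS⟩, subset_rfl⟩
  rcases exists_leaf_or_separator_of_not_biconnSet hconn.preconnected hbc with
    ⟨y, hy, x, hyx⟩ | ⟨w, hw, a, ha, haw, hua⟩
  · exact ⟨{y}, isPendantBlock_singleton hyx, ⟨y, rfl, hy⟩,
      Set.singleton_subset_iff.mpr (Set.mem_insert_of_mem _ hy)⟩
  · have hsub : compAvoiding G w a ⊆ compAvoiding G u c :=
      compAvoiding_eq_of_mem ha ▸ compAvoiding_subset_of_notMem hua
    have hlt : (compAvoiding G w a).ncard < n :=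
      hn ▸ Set.ncard_lt_ncard ⟨hsub, fun h => ne_of_mem_compAvoiding (h hw) rfl⟩
    obtain ⟨P, hP, hPD, hPsub⟩ :=
      ih _ hlt haw (ne_of_mem_compAvoiding hw).symm hua rfl
    exact ⟨P, hP, hPD.mono (Set.inter_subset_inter_right _ hsub),
      hPsub.trans (Set.insert_subset (Set.mem_insert_of_mem _ hw)
        (hsub.trans (Set.subset_insert _ _)))⟩

lemma notMem_of_mem_compsAvoiding {S : Set V} (hS : S ∈ compsAvoiding G u) : u ∉ S := by
  obtain ⟨c, -, rfl⟩ := hS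
  exact fun h => ne_of_mem_compAvoiding h rfl

lemma pairwiseDisjoint_compsAvoiding : (compsAvoiding G u).PairwiseDisjoint id := by
  rintro _ ⟨c, -, rfl⟩ _ ⟨c', -, rfl⟩ hne
  refine Set.disjoint_left.mpr fun x hx hx' => hne ?_
  rw [← compAvoiding_eq_of_mem hx, compAvoiding_eq_of_mem hx']

/-- A common vertex would reach `u` inside `S`, hence without meeting `v`. -/
lemma disjoint_of_mem_compsAvoiding (hconn : G.Preconnected) (huv : u ≠ v) {S T : Set V}
    (hS : S ∈ compsAvoiding G u) (hvS : v ∉ S) (hT : T ∈ compsAvoiding G v) (huT : u ∉ T) :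
    Disjoint S T := by
  obtain ⟨c, -, rfl⟩ := hS
  obtain ⟨c', -, rfl⟩ := hT
  refine Set.disjoint_left.mpr fun x hxS hxT => huT ?_
  rw [← compAvoiding_eq_of_mem hxT]
  refine mem_compAvoiding_of_notMem_insert hconn ?_
  rw [compAvoiding_eq_of_mem hxS]
  rintro (h | h)
  exacts [huv h.symm, hvS h]

lemma ncard_compsAvoiding_le [Finite V] (G : SimpleGraph V) (u v : V) :
    (compsAvoiding G u).ncard ≤ {S ∈ compsAvoiding G u | v ∉ S}.ncard + 1 := by
  have hsub :
      compsAvoiding G u ⊆ insert (compAvoiding G u v) {S ∈ compsAvoiding G u | v ∉ S} := by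
    intro S hS
    by_cases hv : v ∈ S
    · obtain ⟨c, -, rfl⟩ := hS
      exact Or.inl (compAvoiding_eq_of_mem hv).symm
    · exact Or.inr ⟨hS, hv⟩
  exact (Set.ncard_le_ncard hsub).trans (Set.ncard_insert_le _ _)

lemma ncard_le_ncard_of_forall_exists_subset_union {α : Type*} {𝒮 Λ : Set (Set α)}
    {K : Set α} (hΛ : Λ.Finite) (hdisj : 𝒮.PairwiseDisjoint id)
    (hK : ∀ S ∈ 𝒮, Disjoint S K) (h : ∀ S ∈ 𝒮, ∃ P ∈ Λ, (P ∩ S).Nonempty ∧ P ⊆ S ∪ K) :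
    𝒮.ncard ≤ Λ.ncard := by
  choose! f hfΛ hfS hfK using h
  refine Set.ncard_le_ncard_of_injOn f hfΛ (fun S hS S' hS' hSS' => ?_) hΛ
  obtain ⟨x, hxP, hxS⟩ := hfS S hS
  have hxS' : x ∈ S' :=
    (hfK S' hS' (hSS' ▸ hxP)).resolve_right (Set.disjoint_left.mp (hK S hS) hxS)
  exact hdisj.elim_set hS hS' x hxS hxS'

theorem dnum_add_dnum_le [Finite V] (hconn : G.Connected) (huv : u ≠ v) :
    Dnum G u + Dnum G v ≤ (pendantBlocks G).ncard + 2 := by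
  rw [dnum_eq_ncard_compsAvoiding hconn.preconnected,
    dnum_eq_ncard_compsAvoiding hconn.preconnected]
  have hFu := ncard_compsAvoiding_le G u v
  have hFv := ncard_compsAvoiding_le G v u
  set Fu := {S ∈ compsAvoiding G u | v ∉ S}
  set Fv := {S ∈ compsAvoiding G v | u ∉ S}
  have hcross : ∀ S ∈ Fu, ∀ T ∈ Fv, Disjoint S T := fun S hS T hT =>
    disjoint_of_mem_compsAvoiding hconn.preconnected huv hS.1 hS.2 hT.1 hT.2
  have hdisj : Disjoint Fu Fv := by
    refine Set.disjoint_left.mpr fun S hSu hSv => ?_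
    obtain ⟨c, hc, rfl⟩ := hSu.1
    exact Set.disjoint_left.mp (hcross _ hSu _ hSv) (mem_compAvoiding_self hc)
      (mem_compAvoiding_self hc)
  have hpairwise : (Fu ∪ Fv).PairwiseDisjoint id :=
    Set.pairwiseDisjoint_union.mpr ⟨pairwiseDisjoint_compsAvoiding.subset fun _ h => h.1,
      pairwiseDisjoint_compsAvoiding.subset fun _ h => h.1,
      fun S hS T hT _ => hcross S hS T hT⟩
  have hK : ∀ S ∈ Fu ∪ Fv, Disjoint S {u, v} := by
    rintro S (hS | hS) <;> simp only [Set.disjoint_insert_right, Set.disjoint_singleton_right]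
    exacts [⟨notMem_of_mem_compsAvoiding hS.1, hS.2⟩,
      ⟨hS.2, notMem_of_mem_compsAvoiding hS.1⟩]
  have hpend : ∀ S ∈ Fu ∪ Fv,
      ∃ P ∈ pendantBlocks G, (P ∩ S).Nonempty ∧ P ⊆ S ∪ {u, v} := by
    rintro S (⟨⟨c, hc, rfl⟩, hv⟩ | ⟨⟨c, hc, rfl⟩, hu⟩)
    · obtain ⟨P, hP, hPS, hPsub⟩ := exists_pendantBlock_of_compAvoiding hconn hc huv.symm hv
      exact ⟨P, hP, hPS, hPsub.trans (Set.insert_subset (by simp) Set.subset_union_left)⟩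
    · obtain ⟨P, hP, hPS, hPsub⟩ := exists_pendantBlock_of_compAvoiding hconn hc huv hu
      exact ⟨P, hP, hPS, hPsub.trans (Set.insert_subset (by simp) Set.subset_union_left)⟩
  have hcount := ncard_le_ncard_of_forall_exists_subset_union (Set.toFinite _) hpairwise hK hpend
  rw [Set.ncard_union_eq hdisj] at hcount
  omega

end Counting

section Matching

variable {G : SimpleGraph V} {A B : Set V} {Λ' : Set (Set V)} {N : Set (Set V × Set V)}

lemma IsLegalMatching.eq_of_mem_of_mem (hN : IsLegalMatching G A B Λ' N)
    {q q' : Set V × Set V} (hq : q ∈ N) (hq' : q' ∈ N) {S : Set V}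
    (hS : S ∈ ({q.1, q.2} : Set (Set V))) (hS' : S ∈ ({q'.1, q'.2} : Set (Set V))) :
    q = q' := by
  by_contra hne
  have hinter := hN.2 q hq q' hq' hne
  exact (hinter ▸ ⟨hS, hS'⟩ : S ∈ (∅ : Set (Set V)))

lemma IsLegalMatching.two_mul_ncard_le [Finite V] (hN : IsLegalMatching G A B Λ' N) :
    2 * N.ncard ≤ Λ'.ncard := by
  have hfst : Set.InjOn Prod.fst N := fun q hq q' hq' h =>
    hN.eq_of_mem_of_mem hq hq' (Or.inl rfl) (Or.inl h)
  have hsnd : Set.InjOn Prod.snd N := fun q hq q' hq' h =>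
    hN.eq_of_mem_of_mem hq hq' (Or.inr rfl) (Or.inr h)
  have hdisj : Disjoint (Prod.fst '' N) (Prod.snd '' N) := by
    refine Set.disjoint_left.mpr ?_
    rintro _ ⟨q, hq, rfl⟩ ⟨q', hq', h⟩
    obtain rfl := hN.eq_of_mem_of_mem hq hq' (Or.inl rfl) (Or.inr h.symm)
    exact (hN.1 q hq).2.2.2.2.1 h.symm
  have hsub : Prod.fst '' N ∪ Prod.snd '' N ⊆ Λ' := by
    rintro _ (⟨q, hq, rfl⟩ | ⟨q, hq, rfl⟩)
    exacts [(hN.1 q hq).1, (hN.1 q hq).2.1]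
  calc 2 * N.ncard = (Prod.fst '' N).ncard + (Prod.snd '' N).ncard := by
        rw [hfst.ncard_image, hsnd.ncard_image]; ring
    _ = (Prod.fst '' N ∪ Prod.snd '' N).ncard := (Set.ncard_union_eq hdisj).symm
    _ ≤ Λ'.ncard := Set.ncard_le_ncard hsub

lemma two_mul_maxMatching_le [Finite V] (G : SimpleGraph V) (A B : Set V)
    (Λ' : Set (Set V)) : 2 * maxMatching G A B Λ' ≤ Λ'.ncard := by
  have hne : {k | ∃ N, IsLegalMatching G A B Λ' N ∧ N.ncard = k}.Nonempty :=
    ⟨0, ∅, ⟨fun _ h => h.elim, fun _ h => h.elim⟩, Set.ncard_empty _⟩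
  have : maxMatching G A B Λ' ≤ Λ'.ncard / 2 := csSup_le hne fun k ⟨N, hN, hk⟩ => by
    have := hN.two_mul_ncard_le
    omega
  omega

end Matching

theorem stmt_16_general [Fintype V] (G : SimpleGraph V) (A B : Set V)
    (hconn : G.Connected) (hcard : 3 < (pendantBlocks G).ncard) :
    {u : V | Massive G A B u}.ncard ≤ 1 ∧
    ((∃ u : V, Massive G A B u) → ∀ v : V, ¬Critical G A B v) := by
  have hM := two_mul_maxMatching_le G A B (pendantBlocks G)
  have hR : Rnum G A B (pendantBlocks G) =
      (pendantBlocks G).ncard - 2 * maxMatching G A B (pendantBlocks G) := rfl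
  refine ⟨(Set.ncard_le_one).mpr fun u ⟨_, hu⟩ v ⟨_, hv⟩ => ?_,
    fun ⟨u, _, hu⟩ v ⟨_, hv⟩ => ?_⟩
  · by_contra huv
    have := dnum_add_dnum_le hconn huv
    omega
  · by_cases huv : u = v
    · subst huv
      omega
    · have := dnum_add_dnum_le hconn huv
      omega

theorem stmt_16 [Fintype V] (G : SimpleGraph V) (A B : Set V)
    (hdisj : Disjoint A B) (hcov : A ∪ B = Set.univ)
    (hbip : ∀ u v : V, G.Adj u v → (u ∈ A ∧ v ∈ B) ∨ (u ∈ B ∧ v ∈ A))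
    (hconn : G.Connected) (hcard : 3 < (pendantBlocks G).ncard) :
    {u : V | Massive G A B u}.ncard ≤ 1 ∧
    ((∃ u : V, Massive G A B u) → ∀ v : V, ¬Critical G A B v) :=
  stmt_16_general G A B hconn hcard

end
end AugBic
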